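/- arXiv:1302.3741 — 4 statements merged into one kernel-verified Lean document; each statement's English description precedes it below -/
import Mathlib

section
/- Let A be an irreducible nonnegative n×n real matrix whose smallest nonzero entry is a_min, and let u ∈ ℝ^n be a nonzero nonnegative vector with Au ≤ u (componentwise). Then a_min ≤ 1, every coordinate of u is strictly positive, and u_min / u_max ≥ a_min^n, where u_min and u_max denote the minimum and maximum coordinates of u. -/
open Matrix

/-- A nonnegative square matrix is irreducible if its support digraph is strongly connected. -/
def MatIrreducible {n : ℕ} (A : Matrix (Fin n) (Fin n) ℝ) : Prop :=
  ∀ i j : Fin n, Relation.ReflTransGen (fun a b => 0 < A a b) i j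

/-!
Every edge `i → j` of the support digraph gives `A i j * u j ≤ (A *ᵥ u) i ≤ u i`, hence
`a_min * u j ≤ u i`. So positivity of `u` propagates backwards along edges, and irreducibility
makes `u` positive. Multiplying these inequalities along a simple path, of length `< n`, from the
index of `u_min` to that of `u_max` gives `a_min ^ n * u_max ≤ u_min`; along a cycle through an
edge they give `a_min ^ (k + 1) ≤ 1`.
-/

namespace List

variable {α : Type*} {r : α → α → Prop}

theorem exists_isChain_cons_nodup_of_relationReflTransGen {a b : α}
    (h : Relation.ReflTransGen r a b) :
    ∃ l, IsChain r (a :: l) ∧ getLast (a :: l) (cons_ne_nil _ _) = b ∧ (a :: l).Nodup := by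
  induction h using Relation.ReflTransGen.head_induction_on with
  | refl => exact ⟨[], .singleton _, rfl, nodup_singleton _⟩
  | @head c d hcd _ ih =>
    obtain ⟨l, hchain, hlast, hnodup⟩ := ih
    by_cases hc : c ∈ d :: l
    · -- cut the cycle through `c` off the front of the chain
      obtain ⟨s, t, hst⟩ := append_of_mem hc
      refine ⟨t, (hst ▸ hchain).right_of_append, ?_,
        (hst ▸ hnodup).sublist (sublist_append_right _ _)⟩
      simp only [← hlast, hst, getLast_append_of_ne_nil _ (cons_ne_nil c t)]
    · exact ⟨d :: l, hchain.cons_cons hcd, by rwa [getLast_cons_cons],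
        nodup_cons.mpr ⟨hc, hnodup⟩⟩

theorem exists_isChain_cons_length_lt_card_of_relationReflTransGen [Fintype α] {a b : α}
    (h : Relation.ReflTransGen r a b) :
    ∃ l, IsChain r (a :: l) ∧ getLast (a :: l) (cons_ne_nil _ _) = b ∧
      l.length < Fintype.card α := by
  obtain ⟨l, hchain, hlast, hnodup⟩ := exists_isChain_cons_nodup_of_relationReflTransGen h
  exact ⟨l, hchain, hlast, hnodup.length_le_card⟩

theorem IsChain.pow_length_mul_le {R : Type*} [Semiring R] [PartialOrder R] [IsOrderedRing R]
    {f : α → R} {c : R} (hc : 0 ≤ c) (hf : ∀ a b, r a b → c * f b ≤ f a) :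
    ∀ {a : α} {l : List α}, IsChain r (a :: l) →
      c ^ l.length * f (getLast (a :: l) (cons_ne_nil _ _)) ≤ f a
  | _, [], _ => by simp
  | a, b :: l, h => by
    rw [isChain_cons_cons] at h
    calc c ^ (b :: l).length * f (getLast (a :: b :: l) (cons_ne_nil _ _))
        = c * (c ^ l.length * f (getLast (b :: l) (cons_ne_nil _ _))) := by
          rw [getLast_cons_cons, length_cons, pow_succ', mul_assoc]
      _ ≤ c * f b := mul_le_mul_of_nonneg_left (pow_length_mul_le hc hf h.2) hc
      _ ≤ f a := hf a b h.1

end List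

namespace Matrix

variable {ι R : Type*} [Fintype ι] [Semiring R] [PartialOrder R] [IsOrderedRing R]
  {A : Matrix ι ι R} {u : ι → R}

theorem apply_mul_le_of_mulVec_le (hA : ∀ i j, 0 ≤ A i j) (hu : 0 ≤ u)
    (hAu : A *ᵥ u ≤ u) (i j : ι) : A i j * u j ≤ u i :=
  calc A i j * u j ≤ ∑ k, A i k * u k :=
        Finset.single_le_sum (fun k _ => mul_nonneg (hA i k) (hu k)) (Finset.mem_univ j)
    _ ≤ u i := hAu i

theorem mul_le_of_mulVec_le {c : R} (hA : ∀ i j, 0 ≤ A i j) (hu : 0 ≤ u)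
    (hAu : A *ᵥ u ≤ u) (hcA : ∀ i j, 0 < A i j → c ≤ A i j) {i j : ι} (hij : 0 < A i j) :
    c * u j ≤ u i :=
  (mul_le_mul_of_nonneg_right (hcA i j hij) (hu j)).trans (apply_mul_le_of_mulVec_le hA hu hAu i j)

end Matrix

namespace MatIrreducible

variable {n : ℕ} {A : Matrix (Fin n) (Fin n) ℝ} {u : Fin n → ℝ} {c : ℝ}

theorem pos_of_mulVec_le (hirr : MatIrreducible A) (hA : ∀ i j, 0 ≤ A i j) (hu : 0 ≤ u)
    (hu0 : u ≠ 0) (hAu : A *ᵥ u ≤ u) (i : Fin n) : 0 < u i := by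
  obtain ⟨j, hj⟩ : ∃ j, 0 < u j := by
    obtain ⟨j, hj⟩ := Function.ne_iff.mp hu0
    exact ⟨j, (hu j).lt_of_ne' hj⟩
  induction hirr i j using Relation.ReflTransGen.head_induction_on with
  | refl => exact hj
  | head hab _ ih =>
    exact (mul_pos hab ih).trans_le (apply_mul_le_of_mulVec_le hA hu hAu _ _)

theorem exists_pow_mul_le_of_mulVec_le (hirr : MatIrreducible A) (hA : ∀ i j, 0 ≤ A i j)
    (hu : 0 ≤ u) (hAu : A *ᵥ u ≤ u) (hc : 0 ≤ c) (hcA : ∀ i j, 0 < A i j → c ≤ A i j)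
    (i j : Fin n) : ∃ k < n, c ^ k * u j ≤ u i := by
  obtain ⟨l, hchain, hlast, hlen⟩ :=
    List.exists_isChain_cons_length_lt_card_of_relationReflTransGen (hirr i j)
  refine ⟨l.length, by simpa using hlen, ?_⟩
  simpa [hlast] using
    hchain.pow_length_mul_le hc fun _ _ hab => mul_le_of_mulVec_le hA hu hAu hcA hab

theorem le_one_of_mulVec_le (hirr : MatIrreducible A) (hA : ∀ i j, 0 ≤ A i j) (hu : 0 ≤ u)
    (hu0 : u ≠ 0) (hAu : A *ᵥ u ≤ u) (hc : 0 ≤ c) (hcA : ∀ i j, 0 < A i j → c ≤ A i j)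
    {i j : Fin n} (hij : 0 < A i j) : c ≤ 1 := by
  obtain ⟨k, -, hk⟩ := hirr.exists_pow_mul_le_of_mulVec_le hA hu hAu hc hcA j i
  have hcycle : c ^ (k + 1) * u i ≤ u i :=
    calc c ^ (k + 1) * u i = c * (c ^ k * u i) := by ring
      _ ≤ c * u j := mul_le_mul_of_nonneg_left hk hc
      _ ≤ u i := mul_le_of_mulVec_le hA hu hAu hcA hij
  exact (pow_le_one_iff_of_nonneg hc k.succ_ne_zero).mp
    ((mul_le_iff_le_one_left (hirr.pos_of_mulVec_le hA hu hu0 hAu i)).mp hcycle)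

end MatIrreducible

theorem stmt0_general {n : ℕ} (A : Matrix (Fin n) (Fin n) ℝ)
    (hA : ∀ i j, 0 ≤ A i j) (hirr : MatIrreducible A)
    (amin : ℝ) (hmin : ∀ i j, A i j ≠ 0 → amin ≤ A i j)
    (hex : ∃ i j, A i j = amin ∧ A i j ≠ 0)
    (u : Fin n → ℝ) (hu : 0 ≤ u) (hu0 : u ≠ 0) (hAu : A *ᵥ u ≤ u) :
    amin ≤ 1 ∧ (∀ i, 0 < u i) ∧ amin ^ n ≤ (⨅ i, u i) / (⨆ i, u i) := by
  obtain ⟨i₀, j₀, hamin, hne⟩ := hex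
  have hedge : 0 < A i₀ j₀ := (hA i₀ j₀).lt_of_ne' hne
  have hamin_pos : 0 < amin := hamin ▸ hedge
  have hcA (i j : Fin n) (hij : 0 < A i j) : amin ≤ A i j := hmin i j hij.ne'
  have hamin_le_one := hirr.le_one_of_mulVec_le hA hu hu0 hAu hamin_pos.le hcA hedge
  have hpos := hirr.pos_of_mulVec_le hA hu hu0 hAu
  refine ⟨hamin_le_one, hpos, ?_⟩
  have : Nonempty (Fin n) := ⟨i₀⟩
  obtain ⟨imin, himin⟩ := exists_eq_ciInf_of_finite (f := u)
  obtain ⟨imax, himax⟩ := exists_eq_ciSup_of_finite (f := u)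
  obtain ⟨k, hk, hpath⟩ :=
    hirr.exists_pow_mul_le_of_mulVec_le hA hu hAu hamin_pos.le hcA imin imax
  rw [← himin, ← himax, le_div_iff₀ (hpos imax)]
  calc amin ^ n * u imax ≤ amin ^ k * u imax :=
        mul_le_mul_of_nonneg_right (pow_le_pow_of_le_one hamin_pos.le hamin_le_one hk.le) (hu imax)
    _ ≤ u imin := hpath

theorem stmt0 {n : ℕ} (hn : 0 < n) (A : Matrix (Fin n) (Fin n) ℝ)
    (hA : ∀ i j, 0 ≤ A i j) (hirr : MatIrreducible A)
    (amin : ℝ) (hmin : ∀ i j, A i j ≠ 0 → amin ≤ A i j)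
    (hex : ∃ i j, A i j = amin ∧ A i j ≠ 0)
    (u : Fin n → ℝ) (hu : 0 ≤ u) (hu0 : u ≠ 0) (hAu : A *ᵥ u ≤ u) :
    amin ≤ 1 ∧ (∀ i, 0 < u i) ∧ amin ^ n ≤ (⨅ i, u i) / (⨆ i, u i) :=
  stmt0_general A hA hirr amin hmin hex u hu hu0 hAu
end

section
/- Let x = P(x) be a quadratic MPS with least fixed point q* ∈ ℝ^n_{≥0}, and let z ∈ ℝ^n be a vector such that I − B(z) is nonsingular, where B is the Jacobian of P. Then q* − N_P(z) = (I − B(z))^{−1} · ((B(q*) − B(z))/2) · (q* − z), where N_P(z) := z + (I − B(z))^{−1}(P(z) − z) is the Newton operator. -/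
/-!
The trapezoid rule is exact for polynomials of total degree at most two: writing `D_v` for the
derivative in direction `v`, `2 (p x - p y) = (D_{x-y} p) x + (D_{x-y} p) y`, which is checked on
the monomials `1`, `X j`, `X j * X k`. Applied to the components of `P` this reads
`P q - P z = ½ (B q + B z) (q - z)`, and substituting `P q = q` into
`q - N_P z = (I - B z)⁻¹ (q - P z - B z (q - z))` gives the claim.
-/

open Matrix MvPolynomial

/-- Evaluation of a vector of multivariate polynomials. -/
noncomputable def evalVec {n : ℕ} (P : Fin n → MvPolynomial (Fin n) ℝ) (x : Fin n → ℝ) :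
    Fin n → ℝ := fun i => MvPolynomial.eval x (P i)

/-- The Jacobian matrix B(x)_{ij} = ∂P_i/∂x_j evaluated at x. -/
noncomputable def jacob {n : ℕ} (P : Fin n → MvPolynomial (Fin n) ℝ) (x : Fin n → ℝ) :
    Matrix (Fin n) (Fin n) ℝ :=
  Matrix.of fun i j => MvPolynomial.eval x (MvPolynomial.pderiv j (P i))

/-- The Newton operator N_P(z) = z + (I - B(z))⁻¹ (P(z) - z). -/
noncomputable def newtonOp {n : ℕ} (P : Fin n → MvPolynomial (Fin n) ℝ) (z : Fin n → ℝ) :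
    Fin n → ℝ := z + (1 - jacob P z)⁻¹ *ᵥ (evalVec P z - z)

theorem Finsupp.eq_zero_or_single_or_add_single_of_sum_le_two {σ : Type*} (m : σ →₀ ℕ)
    (h : (m.sum fun _ e => e) ≤ 2) :
    m = 0 ∨ (∃ j, m = single j 1) ∨ ∃ j k, m = single j 1 + single k 1 := by
  classical
  obtain ⟨s, rfl⟩ := Multiset.toFinsupp.surjective m
  replace h : Multiset.card s ≤ 2 := by
    simpa using (Finsupp.card_toMultiset (Multiset.toFinsupp s)).trans_le h
  interval_cases hs : Multiset.card s
  · simp [Multiset.card_eq_zero.mp hs]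
  · obtain ⟨j, rfl⟩ := Multiset.card_eq_one.mp hs
    exact Or.inr (Or.inl ⟨j, Multiset.toFinsupp_singleton j⟩)
  · obtain ⟨j, k, rfl⟩ := Multiset.card_eq_two.mp hs
    refine Or.inr (Or.inr ⟨j, k, ?_⟩)
    rw [Multiset.insert_eq_cons, ← Multiset.singleton_add, Multiset.toFinsupp_add,
      Multiset.toFinsupp_singleton, Multiset.toFinsupp_singleton]

namespace MvPolynomial

variable {R σ : Type*} [Fintype σ]

section CommSemiring

variable [CommSemiring R]

noncomputable def directionalPDeriv (v : σ → R) :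
    Derivation R (MvPolynomial σ R) (MvPolynomial σ R) :=
  ∑ l, v l • pderiv l

theorem directionalPDeriv_apply (v : σ → R) (p : MvPolynomial σ R) :
    directionalPDeriv v p = ∑ l, v l • pderiv l p := by
  rw [directionalPDeriv, ← Derivation.coeFnAddMonoidHom_apply, map_sum, Finset.sum_apply]
  rfl

theorem directionalPDeriv_X (v : σ → R) (j : σ) : directionalPDeriv v (X j) = C (v j) := by
  classical
  simp [directionalPDeriv_apply, pderiv_X, Pi.single_apply, smul_eq_C_mul]

theorem eval_directionalPDeriv (x v : σ → R) (p : MvPolynomial σ R) :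
    eval x (directionalPDeriv v p) = ∑ l, eval x (pderiv l p) * v l := by
  simp [directionalPDeriv_apply, smul_eval, mul_comm]

end CommSemiring

variable [CommRing R]

theorem two_mul_eval_sub_eval_monomial {m : σ →₀ ℕ} (hm : (m.sum fun _ e => e) ≤ 2) (c : R)
    (x y : σ → R) :
    2 * (eval x (monomial m c) - eval y (monomial m c)) =
      eval x (directionalPDeriv (x - y) (monomial m c)) +
        eval y (directionalPDeriv (x - y) (monomial m c)) := by
  rw [show monomial m c = c • monomial m 1 by rw [smul_monomial, smul_eq_mul, mul_one]]
  rcases m.eq_zero_or_single_or_add_single_of_sum_le_two hm with rfl | ⟨j, rfl⟩ | ⟨j, k, rfl⟩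
  · simp
  · rw [← X_pow_eq_monomial, pow_one]
    simp only [smul_eval, eval_X, Derivation.map_smul, directionalPDeriv_X, Pi.sub_apply, map_sub,
      eval_C]
    ring
  · rw [monomial_single_add, ← X_pow_eq_monomial, pow_one, pow_one]
    simp only [smul_eval, map_mul, eval_X, Derivation.map_smul, Derivation.leibniz,
      directionalPDeriv_X, Pi.sub_apply, smul_eq_mul, map_add, map_sub, eval_C]
    ring

theorem two_mul_eval_sub_eval_of_totalDegree_le_two {p : MvPolynomial σ R}
    (hp : p.totalDegree ≤ 2) (x y : σ → R) :
    2 * (eval x p - eval y p) =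
      eval x (directionalPDeriv (x - y) p) + eval y (directionalPDeriv (x - y) p) := by
  conv_lhs => rw [p.as_sum]
  conv_rhs => rw [p.as_sum]
  simp only [map_sum, Finset.mul_sum, ← Finset.sum_sub_distrib, ← Finset.sum_add_distrib]
  exact Finset.sum_congr rfl fun m hm =>
    two_mul_eval_sub_eval_monomial ((le_totalDegree hm).trans hp) _ x y

end MvPolynomial

section NewtonOperator

variable {n : ℕ} {P : Fin n → MvPolynomial (Fin n) ℝ}

theorem jacob_mulVec (x v : Fin n → ℝ) :
    jacob P x *ᵥ v = fun i => eval x (directionalPDeriv v (P i)) := by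
  ext i
  simp [mulVec, dotProduct, jacob, eval_directionalPDeriv]

theorem evalVec_sub_evalVec_of_totalDegree_le_two (hdeg : ∀ i, (P i).totalDegree ≤ 2)
    (x y : Fin n → ℝ) :
    evalVec P x - evalVec P y = ((1 / 2 : ℝ) • (jacob P x + jacob P y)) *ᵥ (x - y) := by
  ext i
  have h := two_mul_eval_sub_eval_of_totalDegree_le_two (hdeg i) x y
  simp only [Pi.sub_apply, evalVec, add_mulVec, smul_mulVec, jacob_mulVec, Pi.add_apply,
    Pi.smul_apply, smul_eq_mul]
  linarith

theorem sub_newtonOp {z : Fin n → ℝ} (hz : IsUnit (1 - jacob P z).det) (q : Fin n → ℝ) :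
    q - newtonOp P z = (1 - jacob P z)⁻¹ *ᵥ (q - evalVec P z - jacob P z *ᵥ (q - z)) := by
  set A := 1 - jacob P z
  calc q - newtonOp P z = A⁻¹ *ᵥ (A *ᵥ (q - z)) - A⁻¹ *ᵥ (evalVec P z - z) := by
        rw [mulVec_mulVec, nonsing_inv_mul _ hz, one_mulVec, newtonOp, sub_add_eq_sub_sub]
    _ = A⁻¹ *ᵥ (q - evalVec P z - jacob P z *ᵥ (q - z)) := by
        rw [← mulVec_sub, sub_mulVec, one_mulVec]
        congr 1
        abel

end NewtonOperator

theorem stmt2_general {n : ℕ} (P : Fin n → MvPolynomial (Fin n) ℝ)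
    (hdeg : ∀ i, (P i).totalDegree ≤ 2)
    (q : Fin n → ℝ) (hfix : evalVec P q = q)
    (z : Fin n → ℝ) (hz : IsUnit (1 - jacob P z).det) :
    q - newtonOp P z =
      (1 - jacob P z)⁻¹ *ᵥ ((((1 : ℝ) / 2) • (jacob P q - jacob P z)) *ᵥ (q - z)) := by
  calc q - newtonOp P z
      = (1 - jacob P z)⁻¹ *ᵥ (evalVec P q - evalVec P z - jacob P z *ᵥ (q - z)) := by
        rw [sub_newtonOp hz, hfix]
    _ = _ := by
        rw [evalVec_sub_evalVec_of_totalDegree_le_two hdeg, ← sub_mulVec]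
        congr 2
        module

theorem stmt2 {n : ℕ} (P : Fin n → MvPolynomial (Fin n) ℝ)
    (hdeg : ∀ i, (P i).totalDegree ≤ 2) (hpos : ∀ i m, 0 ≤ (P i).coeff m)
    (q : Fin n → ℝ) (hq0 : 0 ≤ q) (hfix : evalVec P q = q)
    (hleast : ∀ r : Fin n → ℝ, 0 ≤ r → evalVec P r = r → q ≤ r)
    (z : Fin n → ℝ) (hz : IsUnit (1 - jacob P z).det) :
    q - newtonOp P z =
      (1 - jacob P z)⁻¹ *ᵥ ((((1 : ℝ) / 2) • (jacob P q - jacob P z)) *ᵥ (q - z)) :=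
  stmt2_general P hdeg q hfix z hz
end

section
/- Let x = P(x) be a strongly connected MPS with least fixed point q* > 0, and let B(x) be its Jacobian matrix. Then ρ(B(q*)) ≤ 1, and for every vector y with 0 ≤ y < q* (strict inequality in every coordinate), ρ(B(y)) < 1, where ρ denotes spectral radius. -/
open Matrix MvPolynomial

/-- The spectral radius of a real matrix, as the spectral radius of its
complexification. -/
noncomputable def specRad {n : ℕ} (A : Matrix (Fin n) (Fin n) ℝ) : ENNReal :=
  spectralRadius ℂ (A.map (algebraMap ℝ ℂ))

/-- The dependency graph of an MPS is strongly connected: variable j appears in P_i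
iff the partial derivative ∂P_i/∂x_j is nonzero (coefficients being nonnegative). -/
def StronglyConnectedMPS {n : ℕ} (P : Fin n → MvPolynomial (Fin n) ℝ) : Prop :=
  ∀ i j : Fin n, Relation.ReflTransGen (fun a b => MvPolynomial.pderiv b (P a) ≠ 0) i j

/-!
Suppose `v ≥ 0`, `v ≠ 0` and `v ≤ B(z) v` at `z = q* - ε v ≥ 0` for some `ε > 0`. Since `P` has
nonnegative coefficients, its tangent plane at `z` lies below it on the orthant, so
`q* = P(q*) ≥ P(z) + ε B(z) v ≥ P(z) + ε v`, i.e. `P(z) ≤ z`. By Knaster–Tarski on `[0, z]` there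
is a fixed point below `z`, hence `q* ≤ z = q* - ε v`, which is absurd.

Such a `v` comes from the weak Perron–Frobenius bound: if the nonnegative matrix `B(x)` has
spectral radius at least `c > 0`, the moduli of an eigenvector of maximal modulus give `v ≥ 0`,
`v ≠ 0` with `c v ≤ B(x) v`. For `x = y < q*` and `c = 1`, monotonicity of `B` gives
`v ≤ B(y) v ≤ B(z) v` once `ε` is small enough that `y ≤ z`. For `x = q*` and `c > 1`, continuity
of `B` gives `v ≤ B(z) v` for small `ε`.
-/

open scoped NNReal ENNReal

namespace MvPolynomial

variable {σ : Type*} {p : MvPolynomial σ ℝ}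

lemma eval_nonneg_of_coeff_nonneg (hp : ∀ m, 0 ≤ p.coeff m) {x : σ → ℝ} (hx : 0 ≤ x) :
    0 ≤ eval x p := by
  rw [eval_eq]
  exact Finset.sum_nonneg fun m _ => mul_nonneg (hp m)
    (Finset.prod_nonneg fun i _ => pow_nonneg (hx i) _)

lemma eval_le_eval_of_coeff_nonneg (hp : ∀ m, 0 ≤ p.coeff m) {x y : σ → ℝ} (hx : 0 ≤ x)
    (hxy : x ≤ y) : eval x p ≤ eval y p := by
  rw [eval_eq, eval_eq]
  exact Finset.sum_le_sum fun m _ => mul_le_mul_of_nonneg_left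
    (Finset.prod_le_prod (fun i _ => pow_nonneg (hx i) _)
      fun i _ => pow_le_pow_left₀ (hx i) (hxy i) _) (hp m)

lemma coeff_pderiv_nonneg (hp : ∀ m, 0 ≤ p.coeff m) (j : σ) (m : σ →₀ ℕ) :
    0 ≤ (pderiv j p).coeff m := by
  rw [coeff_pderiv]
  exact mul_nonneg (hp _) (by positivity)

lemma eval_add_sum_pderiv_le [Fintype σ] (hp : ∀ m, 0 ≤ p.coeff m) {a b : σ → ℝ} (ha : 0 ≤ a)
    (hab : a ≤ b) : eval a p + ∑ j, eval a (pderiv j p) * (b j - a j) ≤ eval b p := by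
  classical
  set δ : Derivation ℝ (MvPolynomial σ ℝ) (MvPolynomial σ ℝ) := ∑ j, (b j - a j) • pderiv j
  have hδ (f : MvPolynomial σ ℝ) : eval a (δ f) = ∑ j, eval a (pderiv j f) * (b j - a j) := by
    rw [← Derivation.coeFnAddMonoidHom_apply, map_sum, Finset.sum_apply, map_sum]
    simp [mul_comm]
  -- `T` holds for nonnegative constants and for variables, and is stable under sums and (by the
  -- Leibniz rule for `δ`) under products.
  let T (f : MvPolynomial σ ℝ) : Prop :=
    0 ≤ eval a f ∧ 0 ≤ eval a (δ f) ∧ eval a f + eval a (δ f) ≤ eval b f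
  have hC (c : ℝ) (hc : 0 ≤ c) : T (C c) := by
    simp [T, hc]
  have hX (i : σ) : T (X i) := by
    have hδX : eval a (δ (X i)) = b i - a i := by simp [hδ, pderiv_X, Pi.single_apply]
    simp only [T, hδX, eval_X]
    exact ⟨ha i, sub_nonneg.2 (hab i), by linarith⟩
  have hadd (f g) (hf : T f) (hg : T g) : T (f + g) := by
    obtain ⟨hf0, hf1, hf2⟩ := hf
    obtain ⟨hg0, hg1, hg2⟩ := hg
    simp only [T, map_add]
    exact ⟨by linarith, by linarith, by linarith⟩
  have hmul (f g) (hf : T f) (hg : T g) : T (f * g) := by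
    obtain ⟨hf0, hf1, hf2⟩ := hf
    obtain ⟨hg0, hg1, hg2⟩ := hg
    simp only [T, map_mul, Derivation.leibniz, smul_eq_mul, map_add]
    exact ⟨by positivity, by positivity, by nlinarith⟩
  have hone : T 1 := by simpa using hC 1 zero_le_one
  have hpow (f) (hf : T f) (k : ℕ) : T (f ^ k) := by
    induction k with
    | zero => simpa using hone
    | succ k ih => simpa [pow_succ] using hmul _ _ ih hf
  have hmonomial (m : σ →₀ ℕ) : T (monomial m (p.coeff m)) := by
    rw [monomial_eq]
    exact hmul _ _ (hC _ (hp m)) (Finset.prod_induction _ T hmul hone fun i _ => hpow _ (hX i) _)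
  rw [← hδ, p.as_sum]
  exact (Finset.sum_induction _ T hadd (by simpa using hC 0 le_rfl) fun m _ => hmonomial m).2.2

end MvPolynomial

namespace Matrix

variable {ι : Type*} [Fintype ι] [DecidableEq ι]

lemma exists_mem_spectrum_spectralRadius_eq (A : Matrix ι ι ℂ) (hA : spectralRadius ℂ A ≠ 0) :
    ∃ μ ∈ spectrum ℂ A, spectralRadius ℂ A = ‖μ‖₊ := by
  have hne : (spectrum ℂ A).Nonempty := by
    contrapose! hA
    simp [spectralRadius, hA]
  obtain ⟨μ, hμ, hmax⟩ := Set.exists_max_image _ (fun z : ℂ => ‖z‖₊) A.finite_spectrum hne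
  exact ⟨μ, hμ, le_antisymm (iSup₂_le fun z hz => ENNReal.coe_le_coe.2 (hmax z hz))
    (le_iSup₂ (f := fun z (_ : z ∈ spectrum ℂ A) => (‖z‖₊ : ℝ≥0∞)) μ hμ)⟩

lemma exists_mulVec_eq_smul_of_mem_spectrum {K : Type*} [Field K] {A : Matrix ι ι K} {μ : K}
    (hμ : μ ∈ spectrum K A) : ∃ w ≠ 0, A *ᵥ w = μ • w := by
  rw [← spectrum_toLin', ← Module.End.hasEigenvalue_iff_mem_spectrum] at hμ
  obtain ⟨w, hw, hw0⟩ := hμ.exists_hasEigenvector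
  exact ⟨w, hw0, by simpa using Module.End.mem_eigenspace_iff.1 hw⟩

lemma exists_nonneg_ne_zero_smul_le_mulVec (A : Matrix ι ι ℝ) (hA : ∀ i j, 0 ≤ A i j)
    {c : ℝ≥0} (hc : 0 < c) (hcA : c ≤ spectralRadius ℂ (A.map (algebraMap ℝ ℂ))) :
    ∃ v : ι → ℝ, 0 ≤ v ∧ v ≠ 0 ∧ (c : ℝ) • v ≤ A *ᵥ v := by
  obtain ⟨μ, hμ, hρ⟩ := exists_mem_spectrum_spectralRadius_eq _
    (lt_of_lt_of_le (ENNReal.coe_pos.2 hc) hcA).ne'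
  obtain ⟨w, hw0, hw⟩ := exists_mulVec_eq_smul_of_mem_spectrum hμ
  have hcμ : (c : ℝ) ≤ ‖μ‖ := by
    rw [hρ, ENNReal.coe_le_coe] at hcA
    exact_mod_cast hcA
  refine ⟨fun i => ‖w i‖, fun i => norm_nonneg _,
    fun h => hw0 (funext fun i => by simpa using congrFun h i), fun i => ?_⟩
  calc (c : ℝ) * ‖w i‖ ≤ ‖μ * w i‖ := by
        rw [norm_mul]
        exact mul_le_mul_of_nonneg_right hcμ (norm_nonneg _)
    _ = ‖∑ j, (A i j : ℂ) * w j‖ := by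
        rw [← smul_eq_mul, ← Pi.smul_apply, ← hw]
        rfl
    _ ≤ ∑ j, A i j * ‖w j‖ := (norm_sum_le _ _).trans_eq (Finset.sum_congr rfl fun j _ => by
        rw [norm_mul, Complex.norm_real, Real.norm_of_nonneg (hA i j)])

end Matrix

lemma exists_isFixedPt_mem_Icc {α : Type*} [ConditionallyCompleteLattice α] {f : α → α}
    {a b : α} (hab : a ≤ b) (hf : MonotoneOn f (Set.Icc a b)) (ha : a ≤ f a) (hb : f b ≤ b) :
    ∃ x ∈ Set.Icc a b, Function.IsFixedPt f x := by
  have : Fact (a ≤ b) := ⟨hab⟩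
  have hmaps (x : Set.Icc a b) : f x ∈ Set.Icc a b :=
    ⟨ha.trans (hf ⟨le_rfl, hab⟩ x.2 x.2.1), (hf x.2 ⟨hab, le_rfl⟩ x.2.2).trans hb⟩
  let g : Set.Icc a b →o Set.Icc a b :=
    ⟨fun x => ⟨f x, hmaps x⟩, fun x y hxy => hf x.2 y.2 hxy⟩
  exact ⟨g.lfp, g.lfp.2, congrArg Subtype.val g.map_lfp⟩

lemma eventually_lt_sub_mul {ι : Type*} [Finite ι] {x q : ι → ℝ} (h : ∀ i, x i < q i)
    (v : ι → ℝ) : ∀ᶠ ε in nhds (0 : ℝ), ∀ i, x i < q i - ε * v i :=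
  Filter.eventually_all.2 fun i =>
    ((continuous_const.sub (continuous_id.mul continuous_const)).tendsto' 0 (q i)
      (by simp)).eventually (lt_mem_nhds (h i))

section MPS

variable {n : ℕ} {P : Fin n → MvPolynomial (Fin n) ℝ} (hpos : ∀ i m, 0 ≤ (P i).coeff m)
include hpos

lemma jacob_nonneg {x : Fin n → ℝ} (hx : 0 ≤ x) (i j : Fin n) : 0 ≤ jacob P x i j :=
  eval_nonneg_of_coeff_nonneg (coeff_pderiv_nonneg (hpos i) j) hx

lemma jacob_mulVec_mono {x y v : Fin n → ℝ} (hx : 0 ≤ x) (hxy : x ≤ y) (hv : 0 ≤ v) :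
    jacob P x *ᵥ v ≤ jacob P y *ᵥ v := fun i =>
  Finset.sum_le_sum (s := Finset.univ) fun j _ => mul_le_mul_of_nonneg_right
    (eval_le_eval_of_coeff_nonneg (coeff_pderiv_nonneg (hpos i) j) hx hxy) (hv j)

lemma jacob_mulVec_nonneg {x v : Fin n → ℝ} (hx : 0 ≤ x) (hv : 0 ≤ v) :
    0 ≤ jacob P x *ᵥ v := fun i =>
  Finset.sum_nonneg (s := Finset.univ) fun j _ => mul_nonneg (jacob_nonneg hpos hx i j) (hv j)

lemma evalVec_add_jacob_mulVec_le {a b : Fin n → ℝ} (ha : 0 ≤ a) (hab : a ≤ b) :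
    evalVec P a + jacob P a *ᵥ (b - a) ≤ evalVec P b := fun i =>
  eval_add_sum_pderiv_le (hpos i) ha hab

lemma exists_fixedPt_le_of_evalVec_le {z : Fin n → ℝ} (hz0 : 0 ≤ z) (hz : evalVec P z ≤ z) :
    ∃ r, 0 ≤ r ∧ evalVec P r = r ∧ r ≤ z := by
  obtain ⟨r, ⟨hr0, hrz⟩, hr⟩ := exists_isFixedPt_mem_Icc hz0
    (fun x hx y _ hxy i => eval_le_eval_of_coeff_nonneg (hpos i) hx.1 hxy)
    (fun i => eval_nonneg_of_coeff_nonneg (hpos i) le_rfl) hz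
  exact ⟨r, hr0, hr, hrz⟩

lemma eq_zero_of_le_jacob_mulVec {q v : Fin n → ℝ} {ε : ℝ} (hfix : evalVec P q = q)
    (hleast : ∀ r : Fin n → ℝ, 0 ≤ r → evalVec P r = r → q ≤ r) (hε : 0 < ε) (hv : 0 ≤ v)
    (hz : 0 ≤ q - ε • v) (hBv : v ≤ jacob P (q - ε • v) *ᵥ v) : v = 0 := by
  have hzq : q - ε • v ≤ q := sub_le_self _ (smul_nonneg hε.le hv)
  have hPz : evalVec P (q - ε • v) ≤ q - ε • v := by
    intro i
    have htaylor := evalVec_add_jacob_mulVec_le hpos hz hzq i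
    rw [sub_sub_cancel, mulVec_smul, hfix] at htaylor
    have := mul_le_mul_of_nonneg_left (hBv i) hε.le
    simp only [Pi.add_apply, Pi.smul_apply, Pi.sub_apply, smul_eq_mul] at htaylor ⊢
    linarith
  obtain ⟨r, hr0, hr, hrz⟩ := exists_fixedPt_le_of_evalVec_le hpos hz hPz
  have hqz := (hleast r hr0 hr).trans hrz
  exact le_antisymm (fun i => by
    have := hqz i
    simp only [Pi.sub_apply, Pi.smul_apply, smul_eq_mul] at this
    exact nonpos_of_mul_nonpos_right (by linarith) hε) hv

lemma eventually_le_jacob_mulVec {q v : Fin n → ℝ} {c : ℝ} (hq : ∀ i, 0 < q i) (hv : 0 ≤ v)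
    (hc : 1 < c) (hcv : c • v ≤ jacob P q *ᵥ v) :
    ∀ᶠ ε in nhds (0 : ℝ), 0 ≤ q - ε • v ∧ v ≤ jacob P (q - ε • v) *ᵥ v := by
  have hcont : Continuous fun ε : ℝ => jacob P (q - ε • v) *ᵥ v :=
    (continuous_pi fun i => continuous_pi fun j => (continuous_eval _).comp
      (continuous_const.sub (continuous_id.smul continuous_const))).matrix_mulVec continuous_const
  have hsupp (i : Fin n) :
      ∀ᶠ ε in nhds (0 : ℝ), 0 < v i → v i < (jacob P (q - ε • v) *ᵥ v) i := by
    by_cases hvi : 0 < v i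
    · have hlt : v i < (jacob P (q - (0 : ℝ) • v) *ᵥ v) i := by
        rw [zero_smul, sub_zero]
        exact (lt_mul_of_one_lt_left hvi hc).trans_le (hcv i)
      exact (((continuous_apply i).comp hcont).tendsto 0 |>.eventually_const_lt hlt).mono
        fun _ h _ => h
    · exact Filter.Eventually.of_forall fun _ h => absurd h hvi
  filter_upwards [eventually_lt_sub_mul hq v, Filter.eventually_all.2 hsupp] with ε hz hlt
  have hz' : 0 ≤ q - ε • v := fun i => (hz i).le
  refine ⟨hz', fun i => ?_⟩
  rcases (hv i).lt_or_eq with hvi | hvi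
  · exact (hlt i hvi).le
  · exact hvi.symm.le.trans (jacob_mulVec_nonneg hpos hz' hv i)

end MPS

theorem stmt4_general {n : ℕ} (P : Fin n → MvPolynomial (Fin n) ℝ)
    (hpos : ∀ i m, 0 ≤ (P i).coeff m)
    (q : Fin n → ℝ) (hq : ∀ i, 0 < q i) (hfix : evalVec P q = q)
    (hleast : ∀ r : Fin n → ℝ, 0 ≤ r → evalVec P r = r → q ≤ r) :
    specRad (jacob P q) ≤ 1 ∧
      ∀ y : Fin n → ℝ, 0 ≤ y → (∀ i, y i < q i) → specRad (jacob P y) < 1 := by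
  refine ⟨?_, fun y hy hyq => ?_⟩
  · by_contra! h
    obtain ⟨c, hc1, hcρ⟩ := ENNReal.lt_iff_exists_nnreal_btwn.1 h
    have hc : (1 : ℝ) < c := by exact_mod_cast hc1
    obtain ⟨v, hv0, hv, hcv⟩ := (jacob P q).exists_nonneg_ne_zero_smul_le_mulVec
      (jacob_nonneg hpos fun i => (hq i).le) (by exact_mod_cast zero_lt_one.trans hc) hcρ.le
    obtain ⟨ε, hε, hz, hBv⟩ := (eventually_le_jacob_mulVec hpos hq hv0 hc hcv).exists_gt
    exact hv (eq_zero_of_le_jacob_mulVec hpos hfix hleast hε hv0 hz hBv)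
  · by_contra! h
    obtain ⟨v, hv0, hv, hBv⟩ := (jacob P y).exists_nonneg_ne_zero_smul_le_mulVec
      (jacob_nonneg hpos hy) one_pos (by rw [ENNReal.coe_one]; exact h)
    obtain ⟨ε, hε, hyz⟩ := (eventually_lt_sub_mul hyq v).exists_gt
    have hyz : y ≤ q - ε • v := fun i => (hyz i).le
    refine hv (eq_zero_of_le_jacob_mulVec hpos hfix hleast hε hv0 (hy.trans hyz) ?_)
    simpa using hBv.trans (jacob_mulVec_mono hpos hy hyz hv0)

theorem stmt4 {n : ℕ} (P : Fin n → MvPolynomial (Fin n) ℝ)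
    (hpos : ∀ i m, 0 ≤ (P i).coeff m)
    (hsc : StronglyConnectedMPS P)
    (q : Fin n → ℝ) (hq : ∀ i, 0 < q i) (hfix : evalVec P q = q)
    (hleast : ∀ r : Fin n → ℝ, 0 ≤ r → evalVec P r = r → q ≤ r) :
    specRad (jacob P q) ≤ 1 ∧
      ∀ y : Fin n → ℝ, 0 ≤ y → (∀ i, y i < q i) → specRad (jacob P y) < 1 :=
  stmt4_general P hpos q hq hfix hleast
end

section
/- Let A ∈ ℝ^{n×n}_{≥0} and b ∈ ℝ^n_{≥0} be such that (I−A)^{−1} = Σ_{k=0}^∞ A^k (the Neumann series converges), (I−A)^{−1} b ≤ 1 (the all-ones vector), A is irreducible with smallest nonzero entry c > 0, b ≠ 0, and p > 0 is the largest entry of b. Then ‖(I−A)^{−1}‖_∞ ≤ n / (p · c^n). -/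
open Matrix

/-!
Let `S = ∑' k, A ^ k = (1 - A)⁻¹`, an entrywise nonnegative matrix. Splitting the series as
`S = ∑_{k<m} A ^ k + S * A ^ m` shows `S * A ^ m ≤ S` entrywise, hence
`S i j * (A ^ ℓ *ᵥ b) j ≤ (S *ᵥ b) i ≤ 1` for every `ℓ`. By irreducibility and Cayley–Hamilton,
`j` reaches an index `i₀` with `b i₀ = p` along a path of length `ℓ < n`, and a positive entry
of `A ^ ℓ` is at least `c ^ ℓ ≥ c ^ n`; here `c ≤ 1` because the same splitting forces
`(A ^ m) j j < 1` on every cycle. So `(A ^ ℓ *ᵥ b) j ≥ p * c ^ n`, every entry of `S` is at most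
`1 / (p * c ^ n)`, and every row sum at most `n / (p * c ^ n)`.
-/

open Finset Polynomial

theorem tsum_pow_eq_sum_range_add_tsum_mul_pow {R : Type*} [Ring R] [TopologicalSpace R]
    [IsTopologicalRing R] [T2Space R] {x : R} (hx : Summable (fun k : ℕ => x ^ k)) (m : ℕ) :
    ∑' k, x ^ k = ∑ k ∈ range m, x ^ k + (∑' k, x ^ k) * x ^ m := by
  rw [← hx.tsum_mul_right, ← hx.sum_add_tsum_nat_add m]
  simp only [pow_add]

namespace Matrix

variable {ι : Type*} [Fintype ι] [DecidableEq ι]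

/-- By Cayley–Hamilton, `A ^ m` is a linear combination of `A ^ ℓ` with `ℓ < Fintype.card ι`. -/
theorem exists_lt_card_pow_apply_ne_zero {R : Type*} [CommRing R] [Nontrivial R]
    (A : Matrix ι ι R) {m : ℕ} {i j : ι} (h : (A ^ m) i j ≠ 0) :
    ∃ ℓ < Fintype.card ι, (A ^ ℓ) i j ≠ 0 := by
  by_contra! hzero
  have hcharpoly : A.charpoly ≠ 1 := fun h1 => by
    have := A.charpoly_natDegree_eq_dim
    rw [h1, natDegree_one] at this
    exact (Fintype.card_pos_iff.2 ⟨i⟩).ne this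
  have hdeg : (X ^ m %ₘ A.charpoly).natDegree < Fintype.card ι := by
    rw [← A.charpoly_natDegree_eq_dim]
    exact natDegree_modByMonic_lt _ A.charpoly_monic hcharpoly
  apply h
  rw [pow_eq_aeval_mod_charpoly, aeval_eq_sum_range' hdeg, sum_apply]
  exact sum_eq_zero fun ℓ hℓ => by simp [hzero ℓ (mem_range.1 hℓ)]

section Nonneg

variable {R : Type*} [CommRing R] [LinearOrder R] [IsStrictOrderedRing R]
  {A : Matrix ι ι R}

theorem pow_succ_apply_pos (hA : ∀ i j, 0 ≤ A i j) {ℓ : ℕ} {i k j : ι}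
    (hik : 0 < (A ^ ℓ) i k) (hkj : 0 < A k j) : 0 < (A ^ (ℓ + 1)) i j := by
  rw [pow_succ, mul_apply]
  exact (sum_pos_iff_of_nonneg fun s _ => mul_nonneg (pow_apply_nonneg hA ℓ i s) (hA s j)).2
    ⟨k, mem_univ k, mul_pos hik hkj⟩

theorem exists_pow_apply_pos_of_reflTransGen (hA : ∀ i j, 0 ≤ A i j) {i j : ι}
    (h : Relation.ReflTransGen (fun a b => 0 < A a b) i j) : ∃ ℓ, 0 < (A ^ ℓ) i j := by
  induction h with
  | refl => exact ⟨0, by simp⟩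
  | tail _ hkj ih =>
    obtain ⟨ℓ, hℓ⟩ := ih
    exact ⟨ℓ + 1, pow_succ_apply_pos hA hℓ hkj⟩

theorem exists_lt_card_pow_apply_pos_of_reflTransGen (hA : ∀ i j, 0 ≤ A i j) {i j : ι}
    (h : Relation.ReflTransGen (fun a b => 0 < A a b) i j) :
    ∃ ℓ < Fintype.card ι, 0 < (A ^ ℓ) i j := by
  obtain ⟨m, hm⟩ := exists_pow_apply_pos_of_reflTransGen hA h
  obtain ⟨ℓ, hℓ, hne⟩ := A.exists_lt_card_pow_apply_ne_zero hm.ne'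
  exact ⟨ℓ, hℓ, (pow_apply_nonneg hA ℓ i j).lt_of_ne' hne⟩

theorem pow_le_pow_apply_of_pos (hA : ∀ i j, 0 ≤ A i j) {c : R} (hc : 0 ≤ c)
    (hcmin : ∀ i j, A i j ≠ 0 → c ≤ A i j) {ℓ : ℕ} {i j : ι} (h : 0 < (A ^ ℓ) i j) :
    c ^ ℓ ≤ (A ^ ℓ) i j := by
  induction ℓ generalizing j with
  | zero =>
    obtain rfl : i = j := by by_contra hij; simp [one_apply_ne hij] at h
    simp
  | succ ℓ ih =>
    have hterm s (_ : s ∈ univ) : 0 ≤ (A ^ ℓ) i s * A s j :=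
      mul_nonneg (pow_apply_nonneg hA ℓ i s) (hA s j)
    rw [pow_succ A, mul_apply] at h ⊢
    obtain ⟨k, hk, hpos⟩ := (sum_pos_iff_of_nonneg hterm).1 h
    have hik := pos_of_mul_pos_left hpos (hA k j)
    have hkj := pos_of_mul_pos_right hpos (pow_apply_nonneg hA ℓ i k)
    calc c ^ (ℓ + 1) = c ^ ℓ * c := pow_succ c ℓ
      _ ≤ (A ^ ℓ) i k * A k j :=
          mul_le_mul (ih hik) (hcmin k j hkj.ne') hc (pow_apply_nonneg hA ℓ i k)
      _ ≤ ∑ s, (A ^ ℓ) i s * A s j := single_le_sum hterm hk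

end Nonneg

theorem tsum_apply {m n R X : Type*} [AddCommMonoid R] [TopologicalSpace R] [ContinuousAdd R]
    [T2Space R] {f : X → Matrix m n R} (hf : Summable f) (i : m) (j : n) :
    (∑' x, f x) i j = ∑' x, f x i j :=
  hf.map_tsum (entryAddMonoidHom R i j) (continuous_id.matrix_elem i j)

section NeumannSeries

variable {A : Matrix ι ι ℝ}

theorem tsum_pow_apply_nonneg (hA : ∀ i j, 0 ≤ A i j) (hsum : Summable (fun k : ℕ => A ^ k))
    (i j : ι) : 0 ≤ (∑' k, A ^ k) i j := by
  rw [tsum_apply hsum]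
  exact tsum_nonneg fun k => pow_apply_nonneg hA k i j

theorem tsum_pow_apply_eq_sum_range_add (hsum : Summable (fun k : ℕ => A ^ k)) (m : ℕ)
    (i j : ι) :
    (∑' k, A ^ k) i j = ∑ k ∈ range m, (A ^ k) i j + ((∑' k, A ^ k) * A ^ m) i j := by
  conv_lhs => rw [tsum_pow_eq_sum_range_add_tsum_mul_pow hsum m]
  rw [add_apply, sum_apply]

theorem tsum_pow_mul_pow_apply_le (hA : ∀ i j, 0 ≤ A i j)
    (hsum : Summable (fun k : ℕ => A ^ k)) (m : ℕ) (i j : ι) :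
    ((∑' k, A ^ k) * A ^ m) i j ≤ (∑' k, A ^ k) i j := by
  rw [tsum_pow_apply_eq_sum_range_add hsum m]
  exact le_add_of_nonneg_left (sum_nonneg fun k _ => pow_apply_nonneg hA k i j)

theorem pow_apply_self_lt_one (hA : ∀ i j, 0 ≤ A i j) (hsum : Summable (fun k : ℕ => A ^ k))
    {m : ℕ} (hm : 0 < m) (j : ι) : (A ^ m) j j < 1 := by
  set S := ∑' k, A ^ k
  have hS : 0 ≤ S j j := tsum_pow_apply_nonneg hA hsum j j
  have hfirst : 1 ≤ ∑ k ∈ range m, (A ^ k) j j := by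
    simpa using single_le_sum (fun k _ => pow_apply_nonneg hA k j j) (mem_range.2 hm)
  have hlast : S j j * (A ^ m) j j ≤ (S * A ^ m) j j := by
    rw [mul_apply]
    exact single_le_sum (fun k _ => mul_nonneg (tsum_pow_apply_nonneg hA hsum j k)
      (pow_apply_nonneg hA m k j)) (mem_univ j)
  have := tsum_pow_apply_eq_sum_range_add hsum m j j
  by_contra! h1
  linarith [mul_le_mul_of_nonneg_left h1 hS]

theorem tsum_pow_apply_mul_mulVec_le (hA : ∀ i j, 0 ≤ A i j)
    (hsum : Summable (fun k : ℕ => A ^ k)) {b : ι → ℝ} (hb : 0 ≤ b) (m : ℕ) (i j : ι) :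
    (∑' k, A ^ k) i j * (A ^ m *ᵥ b) j ≤ ((∑' k, A ^ k) *ᵥ b) i := by
  have hAb k : 0 ≤ (A ^ m *ᵥ b) k :=
    sum_nonneg fun s _ => mul_nonneg (pow_apply_nonneg hA m k s) (hb s)
  calc (∑' k, A ^ k) i j * (A ^ m *ᵥ b) j
      ≤ ∑ k, (∑' k, A ^ k) i k * (A ^ m *ᵥ b) k :=
        single_le_sum (fun k _ => mul_nonneg (tsum_pow_apply_nonneg hA hsum i k) (hAb k))
          (mem_univ j)
    _ = (((∑' k, A ^ k) * A ^ m) *ᵥ b) i := by rw [← mulVec_mulVec]; rfl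
    _ ≤ ((∑' k, A ^ k) *ᵥ b) i :=
        sum_le_sum fun k _ =>
          mul_le_mul_of_nonneg_right (tsum_pow_mul_pow_apply_le hA hsum m i k) (hb k)

theorem tsum_pow_apply_le_one_div (hA : ∀ i j, 0 ≤ A i j)
    (hsum : Summable (fun k : ℕ => A ^ k)) {b : ι → ℝ} (hb : 0 ≤ b)
    (hle : (∑' k, A ^ k) *ᵥ b ≤ 1) {q : ℝ} (hq : 0 < q) {m : ℕ} {j : ι}
    (hqj : q ≤ (A ^ m *ᵥ b) j) (i : ι) : (∑' k, A ^ k) i j ≤ 1 / q := by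
  rw [le_div_iff₀ hq]
  calc (∑' k, A ^ k) i j * q
      ≤ (∑' k, A ^ k) i j * (A ^ m *ᵥ b) j :=
        mul_le_mul_of_nonneg_left hqj (tsum_pow_apply_nonneg hA hsum i j)
    _ ≤ ((∑' k, A ^ k) *ᵥ b) i := tsum_pow_apply_mul_mulVec_le hA hsum hb m i j
    _ ≤ 1 := hle i

theorem lt_one_of_le_apply_of_cycle (hA : ∀ i j, 0 ≤ A i j)
    (hsum : Summable (fun k : ℕ => A ^ k)) {c : ℝ} (hc : 0 ≤ c)
    (hcmin : ∀ i j, A i j ≠ 0 → c ≤ A i j) {i j : ι} (hij : 0 < A i j)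
    (hji : Relation.ReflTransGen (fun a b => 0 < A a b) j i) : c < 1 := by
  obtain ⟨ℓ, hℓ⟩ := exists_pow_apply_pos_of_reflTransGen hA hji
  have hcycle := pow_succ_apply_pos hA hℓ hij
  have hpow : c ^ (ℓ + 1) < 1 :=
    (pow_le_pow_apply_of_pos hA hc hcmin hcycle).trans_lt
      (pow_apply_self_lt_one hA hsum ℓ.succ_pos j)
  exact (pow_lt_one_iff_of_nonneg hc ℓ.succ_ne_zero).1 hpow

end NeumannSeries

end Matrix

theorem stmt5_general {n : ℕ} (A : Matrix (Fin n) (Fin n) ℝ)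
    (hA : ∀ i j, 0 ≤ A i j) (hirr : MatIrreducible A)
    (hsum : Summable (fun k : ℕ => A ^ k))
    (hneu : ∑' k : ℕ, A ^ k = (1 - A)⁻¹)
    (b : Fin n → ℝ) (hb : 0 ≤ b)
    (hle : (1 - A)⁻¹ *ᵥ b ≤ 1)
    (c : ℝ) (hc : 0 < c) (hcmin : ∀ i j, A i j ≠ 0 → c ≤ A i j)
    (hcex : ∃ i j, A i j = c ∧ A i j ≠ 0)
    (p : ℝ) (hp : 0 < p) (hpex : ∃ i, b i = p) :
    (⨆ i, ∑ j, |(1 - A)⁻¹ i j|) ≤ n / (p * c ^ n) := by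
  rw [← hneu] at hle ⊢
  obtain ⟨i₀, hbi₀⟩ := hpex
  have hc1 : c ≤ 1 := by
    obtain ⟨i, j, hij, -⟩ := hcex
    exact (lt_one_of_le_apply_of_cycle hA hsum hc.le hcmin (hij ▸ hc) (hirr j i)).le
  have hentry i j : (∑' k, A ^ k) i j ≤ 1 / (p * c ^ n) := by
    obtain ⟨ℓ, hℓn, hℓ⟩ := exists_lt_card_pow_apply_pos_of_reflTransGen hA (hirr j i₀)
    replace hℓn : ℓ ≤ n := by simpa using hℓn.le
    refine tsum_pow_apply_le_one_div hA hsum hb hle (by positivity) (m := ℓ) ?_ i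
    calc p * c ^ n ≤ (A ^ ℓ) j i₀ * b i₀ := by
          rw [hbi₀, mul_comm p]
          gcongr
          exact (pow_le_pow_of_le_one hc.le hc1 hℓn).trans
            (pow_le_pow_apply_of_pos hA hc.le hcmin hℓ)
      _ ≤ (A ^ ℓ *ᵥ b) j :=
        single_le_sum (fun k _ => mul_nonneg (pow_apply_nonneg hA ℓ j k) (hb k)) (mem_univ i₀)
  refine Real.iSup_le (fun i => ?_) (by positivity)
  calc ∑ j, |(∑' k, A ^ k) i j| = ∑ j, (∑' k, A ^ k) i j :=
        sum_congr rfl fun j _ => abs_of_nonneg (tsum_pow_apply_nonneg hA hsum i j)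
    _ ≤ ∑ _j : Fin n, 1 / (p * c ^ n) := sum_le_sum fun j _ => hentry i j
    _ = n / (p * c ^ n) := by
      rw [sum_const, card_univ, Fintype.card_fin, nsmul_eq_mul, mul_one_div]

theorem stmt5 {n : ℕ} (hn : 0 < n) (A : Matrix (Fin n) (Fin n) ℝ)
    (hA : ∀ i j, 0 ≤ A i j) (hirr : MatIrreducible A)
    (hsum : Summable (fun k : ℕ => A ^ k))
    (hunit : IsUnit (1 - A).det)
    (hneu : ∑' k : ℕ, A ^ k = (1 - A)⁻¹)
    (b : Fin n → ℝ) (hb : 0 ≤ b) (hb0 : b ≠ 0)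
    (hle : (1 - A)⁻¹ *ᵥ b ≤ 1)
    (c : ℝ) (hc : 0 < c) (hcmin : ∀ i j, A i j ≠ 0 → c ≤ A i j)
    (hcex : ∃ i j, A i j = c ∧ A i j ≠ 0)
    (p : ℝ) (hp : 0 < p) (hpmax : ∀ i, b i ≤ p) (hpex : ∃ i, b i = p) :
    (⨆ i, ∑ j, |(1 - A)⁻¹ i j|) ≤ n / (p * c ^ n) :=
  stmt5_general A hA hirr hsum hneu b hb hle c hc hcmin hcex p hp hpex
end
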